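/- Let D(m; S) = {(d_1,...,d_m) ∈ R^m : each d_i^2 = 0 and d_{i_1}···d_{i_k} = 0 for every (i_1,...,i_k) ∈ S} be a simplicial infinitesimal subspace of a commutative ring R, and let n = dim D(m;S) be the maximal length of a strictly increasing sequence 1 ≤ i_1 < ... < i_n ≤ m containing no subsequence in S. Then for every (d_1,...,d_m) ∈ D(m;S), the sum d_1 + ... + d_m satisfies (d_1 + ... + d_m)^(n+1) = 0. -/
import Mathlib


/-- If `n = dim D(m;𝒮)`, then `d₁ + ... + d_m ∈ D_n` for any `(d₁,...,d_m) ∈ D(m;𝒮)`. -/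
theorem sum_mem_Dn_of_simplicial (R : Type*) [CommRing R] (m n : ℕ)
    (S : Set (Finset (Fin m))) (d : Fin m → R)
    (hsq : ∀ i, d i ^ 2 = 0)
    (hS : ∀ J ∈ S, ∏ i ∈ J, d i = 0)
    (hdim : ∀ T : Finset (Fin m), T.card = n + 1 → ∃ J ∈ S, J ⊆ T) :
    (∑ i, d i) ^ (n + 1) = 0 := by
  rw [Finset.sum_pow_eq_sum_piAntidiag]
  refine Finset.sum_eq_zero fun k hk => ?_
  rw [Finset.mem_piAntidiag] at hk
  obtain ⟨hsum, -⟩ := hk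
  by_cases h2 : ∃ i, 2 ≤ k i
  · obtain ⟨i, hi⟩ := h2
    have : d i ^ k i = 0 := by
      rw [← Nat.sub_add_cancel hi, pow_add, hsq, mul_zero]
    rw [Finset.prod_eq_zero (Finset.mem_univ i) this, mul_zero]
  · push_neg at h2
    have h1 : ∀ i, k i ≤ 1 := fun i => Nat.lt_succ_iff.mp (h2 i)
    set T : Finset (Fin m) := Finset.univ.filter (fun i => k i = 1) with hT
    have hcard : T.card = n + 1 := by
      rw [← hsum, Finset.card_filter]
      refine Finset.sum_congr rfl fun i _ => ?_
      rcases Nat.le_one_iff_eq_zero_or_eq_one.mp (h1 i) with h | h <;> simp [h]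
    obtain ⟨J, hJS, hJT⟩ := hdim T hcard
    have hprodT : ∏ i, d i ^ k i = ∏ i ∈ T, d i := by
      rw [← Finset.prod_filter_mul_prod_filter_not Finset.univ (fun i => k i = 1)]
      have h0 : ∏ i ∈ Finset.univ.filter (fun i => ¬ k i = 1), d i ^ k i = 1 := by
        refine Finset.prod_eq_one fun i hi => ?_
        rw [Finset.mem_filter] at hi
        have hk0 : k i = 0 := by have := h1 i; omega
        simp [hk0]
      rw [h0, mul_one]
      exact Finset.prod_congr rfl fun i hi => by
        rw [Finset.mem_filter] at hi; rw [hi.2, pow_one]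
    have hT0 : ∏ i ∈ T, d i = 0 := by
      rw [← Finset.prod_sdiff hJT, hS J hJS, mul_zero]
    rw [hprodT, hT0, mul_zero]
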